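/- β_Pool = β_F + Λδ, where Λ = (var[X_S])⁻¹ cov[X_S, U(S)] and δ is the vector of coefficients of U(S) in the least-squares projection of Y_S onto {1, U_1(S),…,U_{S̄−1}(S), X_S}; moreover δ_s = (α_s + β_sᵀμ_s) − (α_{S̄} + β_{S̄}ᵀμ_{S̄}) − β_Fᵀ(μ_s − μ_{S̄}) for s = 1,…,S̄−1. -/

import Mathlib

open MeasureTheory ProbabilityTheory Matrix Finset

/-!
Let `R = a₀ + δᵀU + b₀ᵀX − Y` be the least-squares residual. Minimality makes `R` orthogonal to
`1`, to each dummy `U_k` and to each `X_i`. Orthogonality to `1` and to the centered dummies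
forces `∫_{S = s} R = 0` for every group `s`. Inside group `s` the residual is
`E_s + (b₀ − β_s)ᵀ(X − μ_s) − ε`, where `E_s` is the fitted minus the true group mean, so every
`E_s` vanishes; comparing group `s` with the base group `S̄` gives the formula for `δ_s`, and
orthogonality to `X` becomes `∑_s p_s Σ_s (b₀ − β_s) = 0`, i.e. `b₀ = β_F`. Finally,
orthogonality in covariance form is the normal equation `cov[X, Y] = var[X] b₀ + cov[X, U] δ`,
and `var[X] = ∑_s p_s (Σ_s + (μ_s − μ̄)(μ_s − μ̄)ᵀ)` is positive definite, so
`β_Pool = b₀ + Λδ = β_F + Λδ`.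
-/

section Integrals

variable {Ω : Type*} [MeasurableSpace Ω] {μ : Measure Ω}

theorem integral_eq_sum_setIntegral_fiber {ι : Type*} [Fintype ι] [MeasurableSpace ι]
    [MeasurableSingletonClass ι] {S : Ω → ι} (hS : Measurable S) {f : Ω → ℝ}
    (hf : Integrable f μ) : ∫ ω, f ω ∂μ = ∑ i, ∫ ω in {ω | S ω = i}, f ω ∂μ := by
  rw [← integral_iUnion_fintype (s := fun i => {ω | S ω = i})
    (fun i => hS (measurableSet_singleton i))
    (fun i j hij => Set.disjoint_left.mpr fun ω hi hj => hij (hi.symm.trans hj))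
    fun i => hf.integrableOn, Set.iUnion_eq_univ_iff.mpr fun ω => ⟨S ω, rfl⟩, setIntegral_univ]

theorem memLp_two_of_integrable_sq_of_integrable_add_one_sq [IsFiniteMeasure μ] {f : Ω → ℝ}
    (h0 : Integrable (fun ω => f ω ^ 2) μ) (h1 : Integrable (fun ω => (f ω + 1) ^ 2) μ) :
    MemLp f 2 μ := by
  have hf : Integrable f μ := by
    refine (((h1.sub h0).sub (integrable_const 1)).div_const 2).congr (.of_forall fun ω => ?_)
    simp only [Pi.sub_apply]
    ring
  exact (memLp_two_iff_integrable_sq hf.aestronglyMeasurable).mpr h0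

theorem integral_add_mul_sq {R φ : Ω → ℝ} (hR : MemLp R 2 μ) (hφ : MemLp φ 2 μ) (t : ℝ) :
    ∫ ω, (R ω + t * φ ω) ^ 2 ∂μ
      = ∫ ω, R ω ^ 2 ∂μ + 2 * t * ∫ ω, R ω * φ ω ∂μ + t ^ 2 * ∫ ω, φ ω ^ 2 ∂μ := by
  have hRφ : Integrable (fun ω => R ω * φ ω) μ := hR.integrable_mul hφ
  have h1 := hRφ.const_mul (2 * t)
  have h2 := hφ.integrable_sq.const_mul (t ^ 2)
  calc ∫ ω, (R ω + t * φ ω) ^ 2 ∂μ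
      = ∫ ω, (R ω ^ 2 + 2 * t * (R ω * φ ω)) + t ^ 2 * φ ω ^ 2 ∂μ :=
        integral_congr_ae (.of_forall fun ω => by ring)
    _ = _ := by
      rw [integral_add (hR.integrable_sq.fun_add h1) h2, integral_add hR.integrable_sq h1,
        integral_const_mul, integral_const_mul]

theorem integral_mul_eq_zero_of_forall_integral_sq_le {R φ : Ω → ℝ} (hR : MemLp R 2 μ)
    (hφ : MemLp φ 2 μ) (hmin : ∀ t : ℝ, ∫ ω, R ω ^ 2 ∂μ ≤ ∫ ω, (R ω + t * φ ω) ^ 2 ∂μ) :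
    ∫ ω, R ω * φ ω ∂μ = 0 := by
  have hdisc : discrim (∫ ω, φ ω ^ 2 ∂μ) (2 * ∫ ω, R ω * φ ω ∂μ) 0 ≤ 0 :=
    discrim_le_zero fun t => by
      have := hmin t
      rw [integral_add_mul_sq hR hφ] at this
      linarith
  rw [discrim] at hdisc
  nlinarith [sq_nonneg (∫ ω, R ω * φ ω ∂μ)]

theorem integral_sub_const_eq_zero [IsFiniteMeasure μ] {f : Ω → ℝ} {m a : ℝ}
    (hm : μ.real Set.univ = m) (hf : Integrable f μ) (hmean : ∫ ω, f ω ∂μ = m * a) :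
    ∫ ω, f ω - a ∂μ = 0 := by
  rw [integral_sub hf (integrable_const a), hmean, integral_const, hm, smul_eq_mul, sub_self]

theorem integral_mul_sub_const_of_integral_eq_zero {R f : Ω → ℝ} (hR : Integrable R μ)
    (hRf : Integrable (fun ω => R ω * f ω) μ) (h0 : ∫ ω, R ω ∂μ = 0) (a : ℝ) :
    ∫ ω, R ω * (f ω - a) ∂μ = ∫ ω, R ω * f ω ∂μ := by
  simp only [mul_sub]
  rw [integral_sub hRf (hR.mul_const a), integral_mul_const, h0, zero_mul, sub_zero]

theorem integral_add_const_mul_add_const [IsFiniteMeasure μ] {f g : Ω → ℝ} (hf : MemLp f 2 μ)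
    (hg : MemLp g 2 μ) (hf0 : ∫ ω, f ω ∂μ = 0) (hg0 : ∫ ω, g ω ∂μ = 0) (a b : ℝ) :
    ∫ ω, (f ω + a) * (g ω + b) ∂μ = ∫ ω, f ω * g ω ∂μ + μ.real Set.univ * (a * b) := by
  have hfg : Integrable (fun ω => f ω * g ω) μ := hf.integrable_mul hg
  have hbf : Integrable (fun ω => b * f ω) μ := (hf.integrable one_le_two).const_mul b
  have hag : Integrable (fun ω => a * g ω) μ := (hg.integrable one_le_two).const_mul a
  calc ∫ ω, (f ω + a) * (g ω + b) ∂μ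
      = ∫ ω, (f ω * g ω + b * f ω) + (a * g ω + a * b) ∂μ :=
        integral_congr_ae (.of_forall fun ω => by ring)
    _ = _ := by
      rw [integral_add (hfg.fun_add hbf) (hag.fun_add (integrable_const _)), integral_add hfg hbf,
        integral_add hag (integrable_const _), integral_const_mul, integral_const_mul, hf0, hg0,
        integral_const, smul_eq_mul]
      ring

variable {κ : Type*} [Fintype κ] {Z : Ω → κ → ℝ}

theorem integral_dotProduct (hZ : ∀ i, Integrable (fun ω => Z ω i) μ) (v : κ → ℝ) :
    ∫ ω, v ⬝ᵥ Z ω ∂μ = v ⬝ᵥ fun i => ∫ ω, Z ω i ∂μ := by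
  simp only [dotProduct]
  rw [integral_finsetSum _ fun i _ => (hZ i).const_mul (v i)]
  simp only [integral_const_mul]

theorem memLp_dotProduct {q : ENNReal} (hZ : ∀ i, MemLp (fun ω => Z ω i) q μ) (v : κ → ℝ) :
    MemLp (fun ω => v ⬝ᵥ Z ω) q μ :=
  memLp_finsetSum _ fun i _ => (hZ i).const_mul (v i)

end Integrals

section CenteredAffine

variable {Ω κ : Type*} [Fintype κ] [MeasurableSpace Ω] {ν : Measure Ω} [IsFiniteMeasure ν]
  {Z : Ω → κ → ℝ} {R ε : Ω → ℝ} {c : ℝ} {v : κ → ℝ}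

theorem memLp_of_ae_eq_const_add_dotProduct_sub (hZ : ∀ i, MemLp (fun ω => Z ω i) 2 ν)
    (hR : MemLp R 2 ν) (hRZ : ∀ᵐ ω ∂ν, R ω = c + v ⬝ᵥ Z ω - ε ω) : MemLp ε 2 ν :=
  (((memLp_const c).add (memLp_dotProduct hZ v)).sub hR).ae_eq <| hRZ.mono fun ω hω => by
    simp only [Pi.add_apply, Pi.sub_apply, hω]
    ring

theorem integral_of_ae_eq_const_add_dotProduct_sub (hZ : ∀ i, MemLp (fun ω => Z ω i) 2 ν)
    (hR : MemLp R 2 ν) (hRZ : ∀ᵐ ω ∂ν, R ω = c + v ⬝ᵥ Z ω - ε ω)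
    (hZ0 : ∀ i, ∫ ω, Z ω i ∂ν = 0) (hε0 : ∫ ω, ε ω ∂ν = 0) :
    ∫ ω, R ω ∂ν = ν.real Set.univ * c := by
  have hε := (memLp_of_ae_eq_const_add_dotProduct_sub hZ hR hRZ).integrable one_le_two
  have hvZ : Integrable (fun ω => v ⬝ᵥ Z ω) ν := (memLp_dotProduct hZ v).integrable one_le_two
  have hcvZ : Integrable (fun ω => c + v ⬝ᵥ Z ω) ν := (integrable_const c).add hvZ
  rw [integral_congr_ae hRZ, integral_sub hcvZ hε, integral_add (integrable_const c) hvZ,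
    integral_dotProduct fun i => (hZ i).integrable one_le_two, funext hZ0, integral_const, hε0]
  simp

theorem integral_mul_of_ae_eq_const_add_dotProduct_sub (hZ : ∀ i, MemLp (fun ω => Z ω i) 2 ν)
    (hR : MemLp R 2 ν) (hRZ : ∀ᵐ ω ∂ν, R ω = c + v ⬝ᵥ Z ω - ε ω)
    (hZ0 : ∀ i, ∫ ω, Z ω i ∂ν = 0) (hZε : ∀ i, ∫ ω, Z ω i * ε ω ∂ν = 0) (j : κ) :
    ∫ ω, R ω * Z ω j ∂ν = v ⬝ᵥ fun i => ∫ ω, Z ω i * Z ω j ∂ν := by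
  have hZZ : ∀ i, MemLp (fun ω => Z ω i * Z ω j) 1 ν := fun i =>
    memLp_one_iff_integrable.mpr ((hZ i).integrable_mul (hZ j))
  have hcZ : Integrable (fun ω => c * Z ω j) ν := ((hZ j).integrable one_le_two).const_mul c
  have hvZZ : Integrable (fun ω => v ⬝ᵥ fun i => Z ω i * Z ω j) ν :=
    memLp_one_iff_integrable.mp (memLp_dotProduct hZZ v)
  have hZε' : Integrable (fun ω => Z ω j * ε ω) ν :=
    (hZ j).integrable_mul (memLp_of_ae_eq_const_add_dotProduct_sub hZ hR hRZ)
  calc ∫ ω, R ω * Z ω j ∂ν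
      = ∫ ω, (c * Z ω j + v ⬝ᵥ fun i => Z ω i * Z ω j) - Z ω j * ε ω ∂ν := by
        refine integral_congr_ae (hRZ.mono fun ω hω => ?_)
        simp only [hω, dotProduct, add_mul, sub_mul, Finset.sum_mul, mul_assoc]
        ring
    _ = v ⬝ᵥ fun i => ∫ ω, Z ω i * Z ω j ∂ν := by
      rw [integral_sub (hcZ.fun_add hvZZ) hZε', integral_add hcZ hvZZ, integral_const_mul,
        integral_dotProduct fun i => memLp_one_iff_integrable.mp (hZZ i), hZ0, hZε]
      ring

end CenteredAffine

section LinearModel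

variable {Ω κ : Type*} [MeasurableSpace Ω] {ν : Measure Ω} {X : Ω → κ → ℝ} {Y ε : Ω → ℝ}
  {m α : ℝ} {μ β : κ → ℝ}

theorem ae_eq_centered_of_linearModel [Fintype κ] {R : Ω → ℝ} {c : ℝ} {b : κ → ℝ}
    (hmodel : ∀ᵐ ω ∂ν, Y ω = α + β ⬝ᵥ X ω + ε ω) (hR : ∀ᵐ ω ∂ν, R ω = c + b ⬝ᵥ X ω - Y ω) :
    ∀ᵐ ω ∂ν, R ω = (c + b ⬝ᵥ μ - (α + β ⬝ᵥ μ)) + (b - β) ⬝ᵥ (X ω - μ) - ε ω := by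
  filter_upwards [hmodel, hR] with ω hY hR
  simp only [hR, hY, sub_dotProduct, dotProduct_sub]
  ring

theorem memLp_of_ae_eq_affine_sub [Fintype κ] [IsFiniteMeasure ν] {R : Ω → ℝ} {c : ℝ}
    {b : κ → ℝ} (hX : ∀ i, MemLp (fun ω => X ω i) 2 ν) (hY : MemLp Y 2 ν)
    (hR : ∀ᵐ ω ∂ν, R ω = c + b ⬝ᵥ X ω - Y ω) : MemLp R 2 ν :=
  (((memLp_const c).add (memLp_dotProduct hX b)).sub hY).ae_eq (hR.mono fun _ h => h.symm)

theorem integral_of_linearModel [Fintype κ] [IsFiniteMeasure ν] {R : Ω → ℝ} {c : ℝ}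
    {b : κ → ℝ} (hm : ν.real Set.univ = m) (hX : ∀ i, MemLp (fun ω => X ω i) 2 ν)
    (hY : MemLp Y 2 ν) (hmean : ∀ i, ∫ ω, X ω i ∂ν = m * μ i)
    (hmodel : ∀ᵐ ω ∂ν, Y ω = α + β ⬝ᵥ X ω + ε ω) (hε : ∫ ω, ε ω ∂ν = 0)
    (hR : ∀ᵐ ω ∂ν, R ω = c + b ⬝ᵥ X ω - Y ω) :
    ∫ ω, R ω ∂ν = m * (c + b ⬝ᵥ μ - (α + β ⬝ᵥ μ)) := by
  rw [integral_of_ae_eq_const_add_dotProduct_sub (fun i => (hX i).sub (memLp_const (μ i)))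
    (memLp_of_ae_eq_affine_sub hX hY hR) (ae_eq_centered_of_linearModel hmodel hR)
    (fun i => integral_sub_const_eq_zero hm ((hX i).integrable one_le_two) (hmean i)) hε, hm]

theorem integral_mul_sub_mean_of_linearModel [Fintype κ] [IsFiniteMeasure ν] {R : Ω → ℝ}
    {c : ℝ} {b : κ → ℝ} {Sig : Matrix κ κ ℝ} (hSig : Sig.IsSymm) (hm : ν.real Set.univ = m)
    (hX : ∀ i, MemLp (fun ω => X ω i) 2 ν) (hY : MemLp Y 2 ν)
    (hmean : ∀ i, ∫ ω, X ω i ∂ν = m * μ i)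
    (hcov : ∀ i j, ∫ ω, (X ω i - μ i) * (X ω j - μ j) ∂ν = m * Sig i j)
    (hmodel : ∀ᵐ ω ∂ν, Y ω = α + β ⬝ᵥ X ω + ε ω) (hXε : ∀ i, ∫ ω, (X ω i - μ i) * ε ω ∂ν = 0)
    (hR : ∀ᵐ ω ∂ν, R ω = c + b ⬝ᵥ X ω - Y ω) (j : κ) :
    ∫ ω, R ω * (X ω j - μ j) ∂ν = m * (Sig *ᵥ (b - β)) j := by
  refine (integral_mul_of_ae_eq_const_add_dotProduct_sub (Z := fun ω => X ω - μ)
    (fun i => (hX i).sub (memLp_const (μ i))) (memLp_of_ae_eq_affine_sub hX hY hR)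
    (ae_eq_centered_of_linearModel hmodel hR)
    (fun i => integral_sub_const_eq_zero hm ((hX i).integrable one_le_two) (hmean i)) hXε j).trans
    ?_
  simp only [Pi.sub_apply, hcov, mulVec, dotProduct, Finset.mul_sum]
  exact Finset.sum_congr rfl fun i _ => by rw [hSig.apply]; ring

theorem integral_sub_mul_sub_of_moments [IsFiniteMeasure ν] {Sig : Matrix κ κ ℝ}
    (hm : ν.real Set.univ = m) (hX : ∀ i, MemLp (fun ω => X ω i) 2 ν)
    (hmean : ∀ i, ∫ ω, X ω i ∂ν = m * μ i)
    (hcov : ∀ i j, ∫ ω, (X ω i - μ i) * (X ω j - μ j) ∂ν = m * Sig i j) (a : κ → ℝ) (i j : κ) :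
    ∫ ω, (X ω i - a i) * (X ω j - a j) ∂ν = m * (Sig i j + (μ i - a i) * (μ j - a j)) := by
  have h := integral_add_const_mul_add_const ((hX i).sub (memLp_const (μ i)))
    ((hX j).sub (memLp_const (μ j)))
    (integral_sub_const_eq_zero hm ((hX i).integrable one_le_two) (hmean i))
    (integral_sub_const_eq_zero hm ((hX j).integrable one_le_two) (hmean j))
    (μ i - a i) (μ j - a j)
  simp only [Pi.sub_apply, sub_add_sub_cancel, hcov, hm] at h
  rw [h]
  ring

end LinearModel

section LinearFit

variable {Ω ι κ : Type*} [Fintype ι] [Fintype κ] (U : ι → Ω → ℝ) (X : Ω → κ → ℝ)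

def linearFit (a : ℝ) (l : ι → ℝ) (b : κ → ℝ) (ω : Ω) : ℝ :=
  a + (∑ k, l k * U k ω) + b ⬝ᵥ X ω

theorem linearFit_add_smul (a a' : ℝ) (l l' : ι → ℝ) (b b' : κ → ℝ) (t : ℝ) (ω : Ω) :
    linearFit U X (a + t * a') (l + t • l') (b + t • b') ω
      = linearFit U X a l b ω + t * linearFit U X a' l' b' ω := by
  simp only [linearFit, Pi.add_apply, Pi.smul_apply, smul_eq_mul, add_dotProduct,
    smul_dotProduct, add_mul, Finset.sum_add_distrib, mul_assoc, ← Finset.mul_sum]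
  ring

@[simp]
theorem linearFit_const (a : ℝ) (ω : Ω) : linearFit U X a 0 0 ω = a := by
  simp [linearFit]

@[simp]
theorem linearFit_single_left [DecidableEq ι] (k : ι) (ω : Ω) :
    linearFit U X 0 (Pi.single k 1) 0 ω = U k ω := by
  simp [linearFit, Pi.single_apply]

@[simp]
theorem linearFit_single_right [DecidableEq κ] (i : κ) (ω : Ω) :
    linearFit U X 0 0 (Pi.single i 1) ω = X ω i := by
  simp [linearFit]

variable [MeasurableSpace Ω]

def IsLeastSquaresFit (Y : Ω → ℝ) (μ : Measure Ω) (a₀ : ℝ) (l₀ : ι → ℝ) (b₀ : κ → ℝ) : Prop :=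
  ∀ a l b, ∫ ω, (linearFit U X a₀ l₀ b₀ ω - Y ω) ^ 2 ∂μ ≤ ∫ ω, (linearFit U X a l b ω - Y ω) ^ 2 ∂μ

variable {U X} {μ : Measure Ω} {Y : Ω → ℝ}

theorem memLp_linearFit_sub [IsFiniteMeasure μ]
    (hint : ∀ a l b, Integrable (fun ω => (linearFit U X a l b ω - Y ω) ^ 2) μ)
    (a : ℝ) (l : ι → ℝ) (b : κ → ℝ) : MemLp (fun ω => linearFit U X a l b ω - Y ω) 2 μ :=
  memLp_two_of_integrable_sq_of_integrable_add_one_sq (hint a l b) <| by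
    simpa [linearFit, add_right_comm _ (1 : ℝ), sub_add_eq_add_sub] using hint (a + 1) l b

theorem memLp_linearFit [IsFiniteMeasure μ]
    (hint : ∀ a l b, Integrable (fun ω => (linearFit U X a l b ω - Y ω) ^ 2) μ)
    (a : ℝ) (l : ι → ℝ) (b : κ → ℝ) : MemLp (linearFit U X a l b) 2 μ := by
  convert (memLp_linearFit_sub hint a l b).sub (memLp_linearFit_sub hint 0 0 0) using 1
  ext ω
  simp

theorem memLp_of_forall_integrable_linearFit_sub_sq [IsFiniteMeasure μ]
    (hint : ∀ a l b, Integrable (fun ω => (linearFit U X a l b ω - Y ω) ^ 2) μ) :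
    MemLp Y 2 μ ∧ (∀ k, MemLp (U k) 2 μ) ∧ ∀ i, MemLp (fun ω => X ω i) 2 μ := by
  classical
  refine ⟨?_, fun k => ?_, fun i => ?_⟩
  · convert (memLp_linearFit_sub hint 0 0 0).neg using 1
    ext ω
    simp
  · convert memLp_linearFit hint 0 (Pi.single k 1) 0 using 1
    ext ω
    simp
  · convert memLp_linearFit hint 0 0 (Pi.single i 1) using 1
    ext ω
    simp

theorem IsLeastSquaresFit.integral_mul_linearFit_eq_zero [IsFiniteMeasure μ]
    (hint : ∀ a l b, Integrable (fun ω => (linearFit U X a l b ω - Y ω) ^ 2) μ)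
    {a₀ : ℝ} {l₀ : ι → ℝ} {b₀ : κ → ℝ}
    (hls : IsLeastSquaresFit U X Y μ a₀ l₀ b₀) (a : ℝ) (l : ι → ℝ) (b : κ → ℝ) :
    ∫ ω, (linearFit U X a₀ l₀ b₀ ω - Y ω) * linearFit U X a l b ω ∂μ = 0 :=
  integral_mul_eq_zero_of_forall_integral_sq_le (memLp_linearFit_sub hint a₀ l₀ b₀)
    (memLp_linearFit hint a l b) fun t => by
      simpa only [linearFit_add_smul, add_sub_right_comm] using
        hls (a₀ + t * a) (l₀ + t • l) (b₀ + t • b)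

theorem covariance_linearFit_right [IsProbabilityMeasure μ] {V : Ω → ℝ} (hV : MemLp V 2 μ)
    (hU : ∀ k, MemLp (U k) 2 μ) (hX : ∀ i, MemLp (fun ω => X ω i) 2 μ)
    (a : ℝ) (l : ι → ℝ) (b : κ → ℝ) :
    cov[V, linearFit U X a l b; μ]
      = ∑ k, l k * cov[V, U k; μ] + ∑ i, b i * cov[V, fun ω => X ω i; μ] := by
  have hlU : ∀ k, MemLp (fun ω => l k * U k ω) 2 μ := fun k => (hU k).const_mul (l k)
  have hbX : ∀ i, MemLp (fun ω => b i * X ω i) 2 μ := fun i => (hX i).const_mul (b i)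
  have hsU : MemLp (fun ω => ∑ k, l k * U k ω) 2 μ := memLp_finsetSum _ fun k _ => hlU k
  have hsX : MemLp (fun ω => ∑ i, b i * X ω i) 2 μ := memLp_finsetSum _ fun i _ => hbX i
  have hfit : linearFit U X a l b
      = fun ω => a + ((fun ω => ∑ k, l k * U k ω) + fun ω => ∑ i, b i * X ω i) ω := by
    ext ω
    simp only [linearFit, dotProduct, Pi.add_apply, add_assoc]
  rw [hfit, covariance_const_add_right ((hsU.add hsX).integrable one_le_two),
    covariance_add_right hV hsU hsX, covariance_fun_sum_right hlU hV,
    covariance_fun_sum_right hbX hV]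
  simp only [covariance_const_mul_right]

theorem IsLeastSquaresFit.covariance_eq [IsProbabilityMeasure μ]
    (hint : ∀ a l b, Integrable (fun ω => (linearFit U X a l b ω - Y ω) ^ 2) μ)
    {a₀ : ℝ} {l₀ : ι → ℝ} {b₀ : κ → ℝ}
    (hls : IsLeastSquaresFit U X Y μ a₀ l₀ b₀) (i : κ) :
    cov[fun ω => X ω i, Y; μ] = ∑ k, l₀ k * cov[fun ω => X ω i, U k; μ]
      + ∑ j, b₀ j * cov[fun ω => X ω i, fun ω => X ω j; μ] := by
  classical
  obtain ⟨-, hU, hX⟩ := memLp_of_forall_integrable_linearFit_sub_sq hint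
  have hR := memLp_linearFit_sub hint a₀ l₀ b₀
  have hR1 := hls.integral_mul_linearFit_eq_zero hint 1 0 0
  have hRX := hls.integral_mul_linearFit_eq_zero hint 0 0 (Pi.single i 1)
  simp only [linearFit_const, linearFit_single_right, mul_one] at hR1 hRX
  have hcovR : cov[fun ω => X ω i, fun ω => linearFit U X a₀ l₀ b₀ ω - Y ω; μ] = 0 := by
    rw [covariance_eq_sub (hX i) hR]
    simp only [Pi.mul_apply, mul_comm (X _ i), hRX, hR1, mul_zero, sub_zero]
  have hY : Y = fun ω => linearFit U X a₀ l₀ b₀ ω - (linearFit U X a₀ l₀ b₀ ω - Y ω) := by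
    ext ω
    ring
  rw [hY, covariance_fun_sub_right (hX i) (memLp_linearFit hint a₀ l₀ b₀) hR, hcovR, sub_zero,
    covariance_linearFit_right (hX i) hU hX]

theorem IsLeastSquaresFit.eq_mulVec_add_mulVec [IsProbabilityMeasure μ]
    (hint : ∀ a l b, Integrable (fun ω => (linearFit U X a l b ω - Y ω) ^ 2) μ)
    {a₀ : ℝ} {l₀ : ι → ℝ} {b₀ : κ → ℝ}
    (hls : IsLeastSquaresFit U X Y μ a₀ l₀ b₀)
    {c : κ → ℝ} (hc : ∀ i, c i = cov[fun ω => X ω i, Y; μ])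
    {C : Matrix κ ι ℝ} (hC : ∀ i k, C i k = cov[fun ω => X ω i, U k; μ])
    {V : Matrix κ κ ℝ} (hV : ∀ i j, V i j = cov[fun ω => X ω i, fun ω => X ω j; μ]) :
    c = C *ᵥ l₀ + V *ᵥ b₀ := by
  ext i
  simp only [hc, hls.covariance_eq hint, Pi.add_apply, mulVec,
    dotProduct, hC, hV, mul_comm (l₀ _), mul_comm (b₀ _)]

end LinearFit

section CenteredDummy

variable {n : ℕ}

def centeredDummy (p : Fin (n + 1) → ℝ) (s : Fin (n + 1)) (k : Fin n) : ℝ :=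
  (if s = k.castSucc then 1 else 0) - p k.castSucc

theorem sum_centeredDummy_mul (p r : Fin (n + 1) → ℝ) (k : Fin n) :
    ∑ s, centeredDummy p s k * r s = r k.castSucc - p k.castSucc * ∑ s, r s := by
  simp [centeredDummy, sub_mul, Finset.sum_sub_distrib, ite_mul, Finset.mul_sum]

theorem eq_zero_of_sum_centeredDummy_mul_eq_zero {p r : Fin (n + 1) → ℝ} (hsum : ∑ s, r s = 0)
    (hdummy : ∀ k, ∑ s, centeredDummy p s k * r s = 0) (s : Fin (n + 1)) : r s = 0 := by
  have hcast : ∀ k : Fin n, r k.castSucc = 0 := fun k => by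
    simpa [sum_centeredDummy_mul, hsum] using hdummy k
  induction s using Fin.lastCases with
  | last => simpa [Fin.sum_univ_castSucc, hcast] using hsum
  | cast k => exact hcast k

theorem sum_mul_centeredDummy_castSucc_sub_last (p : Fin (n + 1) → ℝ) (δ : Fin n → ℝ)
    (k : Fin n) :
    ∑ j, δ j * centeredDummy p k.castSucc j - ∑ j, δ j * centeredDummy p (Fin.last n) j
      = δ k := by
  simp [centeredDummy, mul_sub, Finset.sum_sub_distrib, (Fin.castSucc_lt_last _).ne',
    Fin.castSucc_inj]

end CenteredDummy

section WeightedNormalEquations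

variable {ι κ : Type*} [Fintype ι] [Nonempty ι] {w : ι → ℝ} {A : ι → Matrix κ κ ℝ}

theorem posDef_sum_smul (hw : ∀ s, 0 < w s) (hA : ∀ s, (A s).PosDef) :
    (∑ s, w s • A s).PosDef :=
  posDef_sum Finset.univ_nonempty fun s _ => (hA s).smul (hw s)

theorem eq_inv_mulVec_of_sum_smul_mulVec_sub_eq_zero [Fintype κ] [DecidableEq κ] (hw : ∀ s, 0 < w s)
    (hA : ∀ s, (A s).PosDef) {x : κ → ℝ} {y : ι → κ → ℝ}
    (h : ∑ s, w s • (A s *ᵥ (x - y s)) = 0) :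
    x = (∑ s, w s • A s)⁻¹ *ᵥ ∑ s, w s • (A s *ᵥ y s) := by
  have : Invertible (∑ s, w s • A s) := (posDef_sum_smul hw hA).isUnit.invertible
  refine (inv_mulVec_eq_vec ?_).symm
  simp only [mulVec_sub, smul_sub, Finset.sum_sub_distrib, sub_eq_zero] at h
  rw [← h, sum_mulVec]
  simp [smul_mulVec]

end WeightedNormalEquations

section Groups

variable {Ω κ : Type*} [MeasurableSpace Ω] {P : Measure Ω} {n : ℕ} {S : Ω → Fin (n + 1)}
  {p : Fin (n + 1) → ℝ} {U : Fin n → Ω → ℝ} {X : Ω → κ → ℝ} {Y ε : Ω → ℝ} {a₀ : ℝ}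
  {l₀ : Fin n → ℝ} {b₀ : κ → ℝ}

theorem setIntegral_eq_zero_of_orthogonal_centeredDummy (hS : Measurable S)
    (hU : ∀ k ω, U k ω = centeredDummy p (S ω) k) {R : Ω → ℝ} (hR : Integrable R P)
    (hRU : ∀ k, Integrable (fun ω => R ω * U k ω) P) (h1 : ∫ ω, R ω ∂P = 0)
    (hRU0 : ∀ k, ∫ ω, R ω * U k ω ∂P = 0) (s : Fin (n + 1)) :
    ∫ ω in {ω | S ω = s}, R ω ∂P = 0 := by
  refine eq_zero_of_sum_centeredDummy_mul_eq_zero (p := p)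
    (r := fun s => ∫ ω in {ω | S ω = s}, R ω ∂P) ?_ (fun k => ?_) s
  · rw [← integral_eq_sum_setIntegral_fiber hS hR, h1]
  · rw [← hRU0 k, integral_eq_sum_setIntegral_fiber hS (hRU k)]
    refine Finset.sum_congr rfl fun s _ => ?_
    rw [mul_comm, ← integral_mul_const]
    exact setIntegral_congr_fun (hS (measurableSet_singleton s)) fun ω (hω : S ω = s) => by
      rw [hU, hω]

theorem covariance_eq_sum_groupCovariance [IsProbabilityMeasure P] (hS : Measurable S)
    (hp : ∀ s, P.real {ω | S ω = s} = p s) (hX : ∀ i, MemLp (fun ω => X ω i) 2 P)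
    {μ : Fin (n + 1) → κ → ℝ}    {Sig : Fin (n + 1) → Matrix κ κ ℝ}
    (hmean : ∀ s i, ∫ ω in {ω | S ω = s}, X ω i ∂P = p s * μ s i)
    (hcov : ∀ s i j,
      ∫ ω in {ω | S ω = s}, (X ω i - μ s i) * (X ω j - μ s j) ∂P = p s * Sig s i j)
    (i j : κ) :
    cov[fun ω => X ω i, fun ω => X ω j; P]
      = (∑ s, p s • (Sig s + vecMulVec (μ s - ∑ t, p t • μ t) (μ s - ∑ t, p t • μ t))) i j := by
  have hXmean : ∀ i, ∫ ω, X ω i ∂P = (∑ t, p t • μ t) i := fun i => by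
    simp [integral_eq_sum_setIntegral_fiber hS ((hX i).integrable one_le_two), hmean,
      Finset.sum_apply]
  set μbar := ∑ t, p t • μ t
  have hint : Integrable (fun ω => (X ω i - μbar i) * (X ω j - μbar j)) P :=
    ((hX i).sub (memLp_const _)).integrable_mul ((hX j).sub (memLp_const _))
  rw [covariance, hXmean, hXmean, integral_eq_sum_setIntegral_fiber hS hint]
  simp only [Matrix.sum_apply, Matrix.smul_apply, Matrix.add_apply, vecMulVec_apply, smul_eq_mul]
  refine Finset.sum_congr rfl fun s _ => ?_
  rw [integral_sub_mul_sub_of_moments (ν := P.restrict {ω | S ω = s})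
    ((measureReal_restrict_apply_univ _).trans (hp s)) (fun i => (hX i).restrict _)
    (hmean s) (hcov s)]
  rfl

variable [Fintype κ]

theorem ae_restrict_linearFit_sub_eq (hS : Measurable S)
    (hU : ∀ k ω, U k ω = centeredDummy p (S ω) k) (a : ℝ) (l : Fin n → ℝ) (b : κ → ℝ)
    (s : Fin (n + 1)) :
    ∀ᵐ ω ∂P.restrict {ω | S ω = s}, linearFit U X a l b ω - Y ω
      = (a + ∑ k, l k * centeredDummy p s k) + b ⬝ᵥ X ω - Y ω :=
  ae_restrict_of_forall_mem (hS (measurableSet_singleton s)) fun ω (hω : S ω = s) => by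
    simp only [linearFit, hU, hω]

theorem ae_restrict_linearModel {α : Fin (n + 1) → ℝ} {β : Fin (n + 1) → κ → ℝ}
    (hS : Measurable S) (hY : ∀ ω, Y ω = α (S ω) + β (S ω) ⬝ᵥ X ω + ε ω) (s : Fin (n + 1)) :
    ∀ᵐ ω ∂P.restrict {ω | S ω = s}, Y ω = α s + β s ⬝ᵥ X ω + ε ω :=
  ae_restrict_of_forall_mem (hS (measurableSet_singleton s)) fun ω (hω : S ω = s) => hω ▸ hY ω

theorem IsLeastSquaresFit.setIntegral_eq_zero [IsFiniteMeasure P] (hS : Measurable S)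
    (hU : ∀ k ω, U k ω = centeredDummy p (S ω) k)
    (hint : ∀ a l b, Integrable (fun ω => (linearFit U X a l b ω - Y ω) ^ 2) P)
    (hls : IsLeastSquaresFit U X Y P a₀ l₀ b₀) (s : Fin (n + 1)) :
    ∫ ω in {ω | S ω = s}, linearFit U X a₀ l₀ b₀ ω - Y ω ∂P = 0 := by
  classical
  obtain ⟨-, hUL2, -⟩ := memLp_of_forall_integrable_linearFit_sub_sq hint
  have hR := memLp_linearFit_sub hint a₀ l₀ b₀
  refine setIntegral_eq_zero_of_orthogonal_centeredDummy hS hU (hR.integrable one_le_two)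
    (fun k => hR.integrable_mul (hUL2 k)) ?_ (fun k => ?_) s
  · simpa only [linearFit_const, mul_one] using hls.integral_mul_linearFit_eq_zero hint 1 0 0
  · simpa only [linearFit_single_left] using
      hls.integral_mul_linearFit_eq_zero hint 0 (Pi.single k 1) 0

theorem IsLeastSquaresFit.groupMean_eq [IsFiniteMeasure P] (hS : Measurable S) (hp : ∀ s, 0 < p s)
    (hpS : ∀ s, P.real {ω | S ω = s} = p s) (hU : ∀ k ω, U k ω = centeredDummy p (S ω) k)
    (hint : ∀ a l b, Integrable (fun ω => (linearFit U X a l b ω - Y ω) ^ 2) P)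
    (hls : IsLeastSquaresFit U X Y P a₀ l₀ b₀)
    {μ : Fin (n + 1) → κ → ℝ} {α : Fin (n + 1) → ℝ} {β : Fin (n + 1) → κ → ℝ}
    (hmean : ∀ s i, ∫ ω in {ω | S ω = s}, X ω i ∂P = p s * μ s i)
    (hY : ∀ ω, Y ω = α (S ω) + β (S ω) ⬝ᵥ X ω + ε ω)
    (hε : ∀ s, ∫ ω in {ω | S ω = s}, ε ω ∂P = 0) (s : Fin (n + 1)) :
    (a₀ + ∑ k, l₀ k * centeredDummy p s k) + b₀ ⬝ᵥ μ s = α s + β s ⬝ᵥ μ s := by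
  obtain ⟨hYL2, -, hXL2⟩ := memLp_of_forall_integrable_linearFit_sub_sq hint
  have h := hls.setIntegral_eq_zero hS hU hint s
  rw [integral_of_linearModel ((measureReal_restrict_apply_univ _).trans (hpS s))
    (fun i => (hXL2 i).restrict _) (hYL2.restrict _) (hmean s) (ae_restrict_linearModel hS hY s)
    (hε s) (ae_restrict_linearFit_sub_eq hS hU a₀ l₀ b₀ s)] at h
  exact sub_eq_zero.mp ((mul_eq_zero.mp h).resolve_left (hp s).ne')

theorem IsLeastSquaresFit.eq_within [IsFiniteMeasure P] [DecidableEq κ]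
    (hS : Measurable S) (hp : ∀ s, 0 < p s) (hpS : ∀ s, P.real {ω | S ω = s} = p s)
    (hU : ∀ k ω, U k ω = centeredDummy p (S ω) k)
    (hint : ∀ a l b, Integrable (fun ω => (linearFit U X a l b ω - Y ω) ^ 2) P)
    (hls : IsLeastSquaresFit U X Y P a₀ l₀ b₀)
    {μ : Fin (n + 1) → κ → ℝ} {Sig : Fin (n + 1) → Matrix κ κ ℝ} {β : Fin (n + 1) → κ → ℝ}
    {α : Fin (n + 1) → ℝ} (hmean : ∀ s i, ∫ ω in {ω | S ω = s}, X ω i ∂P = p s * μ s i)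
    (hcov : ∀ s i j,
      ∫ ω in {ω | S ω = s}, (X ω i - μ s i) * (X ω j - μ s j) ∂P = p s * Sig s i j)
    (hSig : ∀ s, (Sig s).PosDef) (hY : ∀ ω, Y ω = α (S ω) + β (S ω) ⬝ᵥ X ω + ε ω)
    (hXε : ∀ s i, ∫ ω in {ω | S ω = s}, (X ω i - μ s i) * ε ω ∂P = 0) :
    b₀ = (∑ s, p s • Sig s)⁻¹ *ᵥ ∑ s, p s • (Sig s *ᵥ β s) := by
  obtain ⟨hYL2, -, hXL2⟩ := memLp_of_forall_integrable_linearFit_sub_sq hint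
  have hR := memLp_linearFit_sub hint a₀ l₀ b₀
  refine eq_inv_mulVec_of_sum_smul_mulVec_sub_eq_zero hp hSig (funext fun i => ?_)
  have hRX : Integrable (fun ω => (linearFit U X a₀ l₀ b₀ ω - Y ω) * X ω i) P :=
    hR.integrable_mul (hXL2 i)
  have h := hls.integral_mul_linearFit_eq_zero hint 0 0 (Pi.single i 1)
  simp only [linearFit_single_right] at h
  rw [Pi.zero_apply, ← h, integral_eq_sum_setIntegral_fiber hS hRX, Finset.sum_apply]
  refine Finset.sum_congr rfl fun s _ => ?_
  rw [← integral_mul_sub_const_of_integral_eq_zero (hR.integrable one_le_two).integrableOn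
    hRX.integrableOn (hls.setIntegral_eq_zero hS hU hint s) (μ s i),
    integral_mul_sub_mean_of_linearModel (isHermitian_iff_isSymm.mp (hSig s).isHermitian)
    ((measureReal_restrict_apply_univ _).trans (hpS s)) (fun i => (hXL2 i).restrict _)
    (hYL2.restrict _) (hmean s) (hcov s) (ae_restrict_linearModel hS hY s) (hXε s)
    (ae_restrict_linearFit_sub_eq hS hU a₀ l₀ b₀ s)]
  rfl

end Groups

/-- `β_Pool = β_F + Λδ`, where `Λ = var[X_S]⁻¹ cov[X_S, U(S)]` and `δ` is the coefficient
vector of `U(S)` in the least-squares projection of `Y_S` onto `{1, U(S), X_S}`; moreover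
`δ_s = (α_s + β_sᵀμ_s) − (α_S̄ + β_S̄ᵀμ_S̄) − β_Fᵀ(μ_s − μ_S̄)`. -/
theorem stmt5
    {Ω : Type*} [MeasurableSpace Ω] (P : Measure Ω) [IsProbabilityMeasure P]
    (n d : ℕ) (S : Ω → Fin (n + 1)) (hS : Measurable S)
    (X : Ω → Fin d → ℝ) (Y : Ω → ℝ) (ε : Ω → ℝ)
    (p : Fin (n + 1) → ℝ) (μv : Fin (n + 1) → Fin d → ℝ)
    (Sig : Fin (n + 1) → Matrix (Fin d) (Fin d) ℝ)
    (αb : Fin (n + 1) → ℝ) (βb : Fin (n + 1) → Fin d → ℝ)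
    (hp : ∀ s, 0 < p s)
    (hmeas : ∀ s, P {ω | S ω = s} = ENNReal.ofReal (p s))
    (hmean : ∀ s i, ∫ ω in {ω | S ω = s}, X ω i ∂P = p s * μv s i)
    (hcovX : ∀ s i j,
      ∫ ω in {ω | S ω = s}, (X ω i - μv s i) * (X ω j - μv s j) ∂P = p s * Sig s i j)
    (hSigPD : ∀ s, (Sig s).PosDef)
    (hY : ∀ ω, Y ω = αb (S ω) + βb (S ω) ⬝ᵥ X ω + ε ω)
    (hε : ∀ s, ∫ ω in {ω | S ω = s}, ε ω ∂P = 0)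
    (hXε : ∀ s i, ∫ ω in {ω | S ω = s}, (X ω i - μv s i) * ε ω ∂P = 0)
    (μbar : Fin d → ℝ) (hμbar : μbar = ∑ s, p s • μv s)
    -- centered bank dummies
    (U : Fin n → Ω → ℝ)
    (hU : ∀ i ω, U i ω = (if S ω = i.castSucc then 1 else 0) - p i.castSucc)
    -- pooled coefficient: var[X_S]⁻¹ cov[X_S, Y_S]
    (VarX : Matrix (Fin d) (Fin d) ℝ)
    (hVarX : ∀ i j, VarX i j =
      (∫ ω, X ω i * X ω j ∂P) - (∫ ω, X ω i ∂P) * (∫ ω, X ω j ∂P))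
    (covXY : Fin d → ℝ)
    (hcovXY : ∀ i, covXY i =
      (∫ ω, X ω i * Y ω ∂P) - (∫ ω, X ω i ∂P) * (∫ ω, Y ω ∂P))
    (βPool : Fin d → ℝ) (hβPool : βPool = VarX⁻¹ *ᵥ covXY)
    -- FEO coefficient
    (βF : Fin d → ℝ)
    (hβF : βF = (∑ s, p s • Sig s)⁻¹ *ᵥ (∑ s, p s • (Sig s *ᵥ βb s)))
    -- Λ = var[X_S]⁻¹ cov[X_S, U(S)]
    (covXU : Matrix (Fin d) (Fin n) ℝ)
    (hcovXU : ∀ i k, covXU i k =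
      (∫ ω, X ω i * U k ω ∂P) - (∫ ω, X ω i ∂P) * (∫ ω, U k ω ∂P))
    (Λ : Matrix (Fin d) (Fin n) ℝ) (hΛ : Λ = VarX⁻¹ * covXU)
    -- δ : coefficients of U(S) in the projection of Y_S onto {1, U(S), X_S}
    (a0 : ℝ) (δ : Fin n → ℝ) (b0 : Fin d → ℝ)
    (hproj : ∀ (a : ℝ) (l : Fin n → ℝ) (b : Fin d → ℝ),
      ∫ ω, (a0 + (∑ k, δ k * U k ω) + b0 ⬝ᵥ X ω - Y ω) ^ 2 ∂P
        ≤ ∫ ω, (a + (∑ k, l k * U k ω) + b ⬝ᵥ X ω - Y ω) ^ 2 ∂P)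
    (hint : ∀ (a : ℝ) (l : Fin n → ℝ) (b : Fin d → ℝ),
      Integrable (fun ω => (a + (∑ k, l k * U k ω) + b ⬝ᵥ X ω - Y ω) ^ 2) P) :
    βPool = βF + Λ *ᵥ δ ∧
      ∀ k : Fin n, δ k =
        (αb k.castSucc + βb k.castSucc ⬝ᵥ μv k.castSucc)
          - (αb (Fin.last n) + βb (Fin.last n) ⬝ᵥ μv (Fin.last n))
          - βF ⬝ᵥ (μv k.castSucc - μv (Fin.last n)) := by
  have hpS : ∀ s, P.real {ω | S ω = s} = p s := fun s => by
    rw [measureReal_def, hmeas, ENNReal.toReal_ofReal (hp s).le]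
  obtain ⟨hYL2, hUL2, hXL2⟩ := memLp_of_forall_integrable_linearFit_sub_sq hint
  have hls : IsLeastSquaresFit U X Y P a0 δ b0 := hproj
  have hVarXcov : ∀ i j, VarX i j = cov[fun ω => X ω i, fun ω => X ω j; P] := fun i j =>
    (hVarX i j).trans (covariance_eq_sub (hXL2 i) (hXL2 j)).symm
  have hVarXsum : VarX = ∑ s, p s • (Sig s + vecMulVec (μv s - μbar) (μv s - μbar)) :=
    Matrix.ext fun i j => hμbar ▸ (hVarXcov i j).trans
      (covariance_eq_sum_groupCovariance hS hpS hXL2 hmean hcovX i j)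
  have hVarXpd : VarX.PosDef := hVarXsum ▸ posDef_sum_smul hp fun s =>
    (hSigPD s).add_posSemidef (by simpa using posSemidef_vecMulVec_self_star (μv s - μbar))
  have := hVarXpd.isUnit.invertible
  have hnormal : covXY = covXU *ᵥ δ + VarX *ᵥ b0 :=
    hls.eq_mulVec_add_mulVec hint
      (fun i => (hcovXY i).trans (covariance_eq_sub (hXL2 i) hYL2).symm)
      (fun i k => (hcovXU i k).trans (covariance_eq_sub (hXL2 i) (hUL2 k)).symm) hVarXcov
  have hb0 : b0 = βF := hβF ▸ hls.eq_within hS hp hpS hU hint hmean hcovX hSigPD hY hXε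
  have hgroup := hls.groupMean_eq hS hp hpS hU hint hmean hY hε
  refine ⟨?_, fun k => ?_⟩
  · rw [hβPool, hnormal, mulVec_add, hΛ, ← mulVec_mulVec, inv_mulVec_eq_vec rfl, hb0, add_comm]
  · have hδ := sum_mul_centeredDummy_castSucc_sub_last p δ k
    have hk := hgroup k.castSucc
    have hlast := hgroup (Fin.last n)
    rw [← hb0, dotProduct_sub]
    linarith
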